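/- arXiv:2502.05856 — 8 statements merged into one kernel-verified Lean document; each statement's English description precedes it below -/
import Mathlib

section
/- The one-dimensional transverse intersection product μ on the enlarged complex EC_N is associative: for all x, y, z ∈ EC_N, μ(μ(x, y), z) = μ(x, μ(y, z)). -/
/-- Basis elements of the one-dimensional enlarged complex of period `N`:
points `P a`, elemental sticks `S a` (the interval `[a, a+1]`), and
infinitesimal sticks `I a`. -/
inductive B (N : ℕ) : Type where
  | P : ZMod N → B N
  | S : ZMod N → B N
  | I : ZMod N → B N
  deriving DecidableEq

/-- The enlarged one-dimensional chain complex: the free ℚ-vector space on `B N`. -/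
abbrev EC (N : ℕ) : Type := B N →₀ ℚ

namespace B

variable {N : ℕ}

/-- Codimension: 1 for points, 0 for sticks and infinitesimal sticks. -/
def cod : B N → ℕ
  | P _ => 1
  | _ => 0

/-- Basis element viewed in `EC N`. -/
noncomputable def e (u : B N) : EC N := Finsupp.single u 1

/-- The transverse intersection product on basis elements. -/
noncomputable def muB : B N → B N → EC N
  | P _, P _ => 0
  | P a, S b => if b = a ∨ b = a - 1 then Finsupp.single (P a) (1/2) else 0
  | S b, P a => if b = a ∨ b = a - 1 then Finsupp.single (P a) (1/2) else 0
  | P a, I b => if b = a then Finsupp.single (P a) (1/4) else 0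
  | I b, P a => if b = a then Finsupp.single (P a) (1/4) else 0
  | S a, S b =>
      if b = a then
        Finsupp.single (I a) (-1) + Finsupp.single (S a) 1 + Finsupp.single (I (a+1)) (-1)
      else if b = a + 1 then Finsupp.single (I (a+1)) 1
      else if b = a - 1 then Finsupp.single (I a) 1
      else 0
  | S a, I b => if b = a ∨ b = a + 1 then Finsupp.single (I b) (1/2) else 0
  | I b, S a => if b = a ∨ b = a + 1 then Finsupp.single (I b) (1/2) else 0
  | I a, I b => if b = a then Finsupp.single (I a) (1/4) else 0

/-- Boundary on basis elements: `∂ (S a) = P (a+1) - P a`, zero otherwise. -/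
noncomputable def bdB : B N → EC N
  | S a => Finsupp.single (P (a+1)) 1 - Finsupp.single (P a) 1
  | _ => 0

/-- Augmentation on basis elements. -/
def epsB : B N → ℚ
  | P _ => 1
  | _ => 0

end B

/-- Bilinear extension of the basis product to `EC N`. -/
noncomputable def mu {N : ℕ} (x y : EC N) : EC N :=
  x.sum fun u cu => y.sum fun v cv => (cu * cv) • B.muB u v

/-- Linear extension of the boundary to `EC N`. -/
noncomputable def bd {N : ℕ} (x : EC N) : EC N := x.sum fun u cu => cu • B.bdB u

/-- Augmentation `ε : EC N → ℚ`. -/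
noncomputable def eps {N : ℕ} (x : EC N) : ℚ := x.sum fun u cu => cu * B.epsB u

/-- The augmentation pairing `⟨x, y⟩ = ε (μ x y)`. -/
noncomputable def pair {N : ℕ} (x y : EC N) : ℚ := eps (mu x y)

/-- The subcomplex `C_N` spanned by points and elemental sticks. -/
noncomputable def Csub (N : ℕ) : Submodule ℚ (EC N) :=
  Submodule.span ℚ
    (Set.range (fun a : ZMod N => Finsupp.single (B.P a) (1 : ℚ)) ∪
     Set.range (fun a : ZMod N => Finsupp.single (B.S a) (1 : ℚ)))

/-!
Record an element of `EC N` by its germs along the circle `ZMod N`: at each `a`, its value on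
the open edge `(a, a + 1)` and, at the vertex `a`, a dual number whose `ε`-part is the coefficient
of the point `P a`. A stick `S a` is `1` on its edge and `1/2` at each endpoint, and `I a` is
`1/4` at the vertex `a`. This recording is injective, and for `N ≥ 3` (so that two distinct sticks share at
most one endpoint) it turns `μ` into the pointwise product of the commutative ring
`ZMod N → ℚ × ℚ[ε]`, which is associative.
-/

open scoped DualNumber

theorem ZMod.natCast_ne_zero_of_pos_of_lt {N k : ℕ} (hk : 0 < k) (hkN : k < N) :
    (k : ZMod N) ≠ 0 := by
  rw [Ne, ZMod.natCast_eq_zero_iff]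
  exact Nat.not_dvd_of_pos_of_lt hk hkN

noncomputable def B.germ {N : ℕ} : B N → ZMod N → ℚ × ℚ[ε]
  | P a => Pi.single a (0, ε)
  | S a =>
      Pi.single a (1, TrivSqZeroExt.inl (1 / 2)) + Pi.single (a + 1) (0, TrivSqZeroExt.inl (1 / 2))
  | I a => Pi.single a (0, TrivSqZeroExt.inl (1 / 4))

noncomputable def germ {N : ℕ} : EC N →ₗ[ℚ] ZMod N → ℚ × ℚ[ε] :=
  Finsupp.linearCombination ℚ B.germ

section Germ

variable {N : ℕ}

theorem germ_single (u : B N) (c : ℚ) : germ (Finsupp.single u c) = c • B.germ u :=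
  Finsupp.linearCombination_single ℚ c u

theorem germ_apply (x : EC N) (a : ZMod N) :
    germ x a = (x (.S a),
      TrivSqZeroExt.inl ((x (.S a) + x (.S (a - 1))) / 2 + x (.I a) / 4) + x (.P a) • ε) := by
  induction x using Finsupp.induction_linear with
  | zero => ext <;> simp
  | add x y hx hy =>
    ext <;> simp [hx, hy]
    ring
  | single u c =>
    cases u <;> ext <;>
      simp [germ_single, B.germ, Pi.single_apply, Finsupp.single_apply] <;> (try split_ifs) <;>
      (simp; try grind)

theorem germ_injective : Function.Injective (germ : EC N → _) := by
  intro x y h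
  have hS (a : ZMod N) : x (.S a) = y (.S a) := by
    simpa [germ_apply] using congr_arg (fun g => (g a).1) h
  have hP (a : ZMod N) : x (.P a) = y (.P a) := by
    simpa [germ_apply] using congr_arg (fun g => (g a).2.snd) h
  have hI (a : ZMod N) : x (.I a) = y (.I a) := by
    have := congr_arg (fun g => (g a).2.fst) h
    simp only [germ_apply, hS] at this
    simpa using this
  ext (a | a | a)
  exacts [hP a, hS a, hI a]

theorem germ_muB (hN : 3 ≤ N) (u v : B N) : germ (B.muB u v) = B.germ u * B.germ v := by
  have h1 (x : ZMod N) : x + 1 ≠ x := by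
    simpa using ZMod.natCast_ne_zero_of_pos_of_lt (N := N) (k := 1) (by omega) (by omega)
  have h2 (x : ZMod N) : x + 1 + 1 ≠ x := by
    simpa [add_assoc, one_add_one_eq_two] using
      ZMod.natCast_ne_zero_of_pos_of_lt (N := N) (k := 2) (by omega) (by omega)
  cases u <;> cases v <;> ext i : 1 <;> simp only [B.muB] <;> (try split_ifs) <;>
    simp only [germ_single, B.germ, map_add, map_zero, Pi.single_apply, Pi.add_apply,
      Pi.mul_apply, Pi.smul_apply, Pi.zero_apply] <;> (try split_ifs) <;>
    simp [Prod.ext_iff, TrivSqZeroExt.ext_iff] <;> grind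

theorem germ_eq_sum (x : EC N) : germ x = x.sum fun u c => c • B.germ u :=
  Finsupp.linearCombination_apply ℚ x

theorem germ_mu (hN : 3 ≤ N) (x y : EC N) : germ (mu x y) = germ x * germ y := by
  simp only [mu, map_finsuppSum, map_smul, germ_muB hN, germ_eq_sum, Finsupp.sum_mul]
  simp only [Finsupp.mul_sum, smul_mul_smul_comm]

end Germ

/-- the one-dimensional transverse intersection product is associative. -/
theorem mu_assoc (N : ℕ) (hN : 3 ≤ N) :
    ∀ x y z : EC N, mu (mu x y) z = mu x (mu y z) := by
  intro x y z
  apply germ_injective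
  rw [germ_mu hN, germ_mu hN, germ_mu hN, germ_mu hN, mul_assoc]
end

section
/- On the original cubical subcomplex C_N (the span of points and elemental sticks, with no infinitesimal elements), the boundary operator satisfies the Leibniz product rule with respect to μ: for any two basis elements u, v each of the form P a or S a, one has ∂(μ(u, v)) = μ(∂u, v) + (−1)^(c(u)) μ(u, ∂v), where c(u) is the codimension of u. -/
section Helpers
variable {N : ℕ}

lemma mu_zero_left (y : EC N) : mu 0 y = 0 := by
  simp [mu]

lemma mu_zero_right (x : EC N) : mu x 0 = 0 := by
  simp [mu]

lemma mu_single_single (u v : B N) (c d : ℚ) :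
    mu (Finsupp.single u c) (Finsupp.single v d) = (c * d) • B.muB u v := by
  unfold mu
  rw [Finsupp.sum_single_index, Finsupp.sum_single_index]
  · simp
  · rw [Finsupp.sum_single_index] <;> simp

lemma mu_sub_left (x y z : EC N) : mu (x - y) z = mu x z - mu y z := by
  unfold mu
  rw [Finsupp.sum_sub_index]
  intro a b₁ b₂
  rw [← Finsupp.sum_sub]
  congr 1
  ext v cv
  rw [sub_mul, sub_smul]

lemma mu_sub_right (x y z : EC N) : mu x (y - z) = mu x y - mu x z := by
  unfold mu
  rw [← Finsupp.sum_sub]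
  apply Finsupp.sum_congr
  intro u _
  rw [Finsupp.sum_sub_index]
  intro a b₁ b₂
  rw [mul_sub, sub_smul]

lemma bd_single (u : B N) (c : ℚ) : bd (Finsupp.single u c) = c • B.bdB u :=
  Finsupp.sum_single_index (by simp)

lemma bd_zero : bd (0 : EC N) = 0 := Finsupp.sum_zero_index

lemma bd_add (x y : EC N) : bd (x + y) = bd x + bd y := by
  unfold bd
  rw [Finsupp.sum_add_index'] <;> intros <;> simp [add_smul]

lemma bd_sub (x y : EC N) : bd (x - y) = bd x - bd y := by
  unfold bd
  rw [Finsupp.sum_sub_index]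
  intros
  rw [sub_smul]

lemma bd_neg (x : EC N) : bd (-x) = - bd x := by
  rw [neg_eq_zero_sub, bd_sub, bd_zero, zero_sub]

end Helpers

/-- the boundary satisfies the Leibniz product rule on the original
cubical subcomplex `C_N` (basis elements of the form `P a` or `S a`). -/
theorem leibniz_on_C (N : ℕ) (hN : 3 ≤ N) :
    ∀ u v : B N, (∃ a : ZMod N, u = B.P a ∨ u = B.S a) →
      (∃ a : ZMod N, v = B.P a ∨ v = B.S a) →
      bd (mu (B.e u) (B.e v))
        = mu (bd (B.e u)) (B.e v) + ((-1 : ℚ) ^ u.cod) • mu (B.e u) (bd (B.e v)) := by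
  haveI : NeZero N := ⟨by omega⟩
  have h1 : (1 : ZMod N) ≠ 0 := by
    intro h
    have : N ∣ 1 := by exact_mod_cast (ZMod.natCast_eq_zero_iff 1 N).mp (by exact_mod_cast h)
    have := Nat.le_of_dvd one_pos this
    omega
  have h2 : (2 : ZMod N) ≠ 0 := by
    intro h
    have : N ∣ 2 := by exact_mod_cast (ZMod.natCast_eq_zero_iff 2 N).mp (by exact_mod_cast h)
    have := Nat.le_of_dvd two_pos this
    omega
  rintro u v ⟨a, ha | ha⟩ ⟨b, hb | hb⟩ <;> subst ha <;> subst hb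
  · -- P P
    simp [B.e, B.cod, mu_single_single, bd_single, B.bdB, B.muB, bd_zero,
      mu_zero_left, mu_zero_right]
  · -- P S
    simp only [B.e, B.cod, mu_single_single, bd_single, B.bdB, B.muB, one_mul, one_smul,
      pow_one, mu_sub_right, mu_zero_left]
    split_ifs <;>
      simp [bd_single, bd_zero, B.bdB, mu_single_single, B.muB]
  · -- S P
    simp only [B.e, B.cod, mu_single_single, bd_single, B.bdB, B.muB, one_mul, one_smul,
      pow_one, mu_sub_left, mu_zero_right]
    split_ifs <;>
      simp [bd_single, bd_zero, B.bdB, mu_single_single, B.muB]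
  · -- S S
    have e1 : ∀ x : ZMod N, x + 1 ≠ x := fun x h => h1 (by rwa [add_eq_left] at h)
    have e1' : ∀ x : ZMod N, x ≠ x + 1 := fun x h => e1 x h.symm
    have e2 : ∀ x : ZMod N, x + 1 ≠ x - 1 := by
      intro x h
      rw [eq_sub_iff_add_eq, add_assoc] at h
      exact h2 (by rwa [one_add_one_eq_two, add_eq_left] at h)
    have e2' : ∀ x : ZMod N, x - 1 ≠ x + 1 := fun x h => e2 x h.symm
    have e3 : ∀ x : ZMod N, x + 1 + 1 ≠ x := by
      intro x h
      rw [add_assoc] at h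
      exact h2 (by rwa [one_add_one_eq_two, add_eq_left] at h)
    have e3' : ∀ x : ZMod N, x ≠ x + 1 + 1 := fun x h => e3 x h.symm
    have e4 : ∀ x : ZMod N, x - 1 ≠ x := fun x h => h1 (by rwa [sub_eq_self] at h)
    have e4' : ∀ x : ZMod N, x ≠ x - 1 := fun x h => e4 x h.symm
    have e5 : ∀ x : ZMod N, x ≠ x - 1 - 1 := by
      intro x h
      rw [sub_sub, eq_sub_iff_add_eq, one_add_one_eq_two] at h
      exact h2 (by rwa [add_eq_left] at h)
    by_cases hba : b = a
    · subst hba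
      simp only [B.e, B.cod, mu_single_single, bd_single, B.bdB, B.muB, one_mul, one_smul,
        pow_zero, mu_sub_left, mu_sub_right, if_pos rfl, bd_add, add_sub_cancel_right,
        if_pos (Or.inl rfl), if_pos (Or.inr rfl), smul_zero, neg_smul]
      simp only [bd_add, bd_neg, bd_single, bd_zero, B.bdB, smul_zero, neg_smul, one_smul,
        zero_add, add_zero, neg_zero, or_true, true_or, if_true, if_pos rfl]
      ext w
      simp only [Finsupp.add_apply, Finsupp.sub_apply, Finsupp.neg_apply, Finsupp.zero_apply,
        Finsupp.smul_apply, Finsupp.single_apply, smul_eq_mul]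
      split_ifs <;> norm_num
    · by_cases hb1 : b = a + 1
      · subst hb1
        simp only [B.e, B.cod, mu_single_single, bd_single, B.bdB, B.muB, one_mul, one_smul,
          pow_zero, mu_sub_left, mu_sub_right, if_neg hba, if_pos rfl, bd_single, bd_zero,
          add_sub_cancel_right]
        simp [e1, e1', e2, e2', e3, e3', hba, bd_single, bd_zero, B.bdB]
      · by_cases hb2 : b = a - 1
        · subst hb2
          simp only [B.e, B.cod, mu_single_single, bd_single, B.bdB, B.muB, one_mul, one_smul,
            pow_zero, mu_sub_left, mu_sub_right, if_neg hba, if_neg hb1, if_pos rfl,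
            bd_single, bd_zero, sub_add_cancel, add_sub_cancel_right]
          simp [e1, e1', e2, e2', e4, e4', e5, hba, hb1, bd_single, bd_zero, B.bdB]
        · have hab : a ≠ b := fun h => hba h.symm
          have hab1 : a ≠ b + 1 := fun h => hb2 (by simp [h])
          have hab2 : a ≠ b - 1 := fun h => hb1 (by simp [h])
          simp only [B.e, B.cod, mu_single_single, bd_single, B.bdB, B.muB, one_mul, one_smul,
            pow_zero, mu_sub_left, mu_sub_right, if_neg hba, if_neg hb1, if_neg hb2,
            bd_zero, add_sub_cancel_right]
          simp [hba, hb1, hb2, hab, hab1, hab2, bd_zero]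
end

section
/- If the period N is odd (and N ≥ 3), the augmentation pairing is non-degenerate on the original cubical subcomplex C_N: for every x ∈ C_N, if ⟨x, y⟩ = 0 for all y ∈ C_N, then x = 0. -/
namespace Aux

variable {N : ℕ}

lemma eps_single (u : B N) (c : ℚ) : eps (Finsupp.single u c) = c * B.epsB u :=
  Finsupp.sum_single_index (zero_mul _)

lemma eps_add (a b : EC N) : eps (a + b) = eps a + eps b :=
  Finsupp.sum_add_index' (fun u => zero_mul _) (fun u b1 b2 => add_mul b1 b2 _)

/-- `eps` as an additive monoid hom. -/
noncomputable def epsHom : EC N →+ ℚ where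
  toFun := eps
  map_zero' := by simp [eps]
  map_add' := eps_add

lemma eps_smul (c : ℚ) (z : EC N) : eps (c • z) = c * eps z := by
  unfold eps
  rw [Finsupp.sum_smul_index (g := z) (b := c) (h := fun u cu => cu * B.epsB u)
    (fun i => zero_mul _), Finsupp.mul_sum]
  simp [mul_assoc]

lemma pair_single (x : EC N) (v : B N) :
    pair x (Finsupp.single v 1) = x.sum fun u cu => cu * eps (B.muB u v) := by
  unfold pair mu
  have h1 : (x.sum fun u cu => (Finsupp.single v (1:ℚ)).sum fun v' cv => (cu * cv) • B.muB u v')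
      = x.sum fun u cu => cu • B.muB u v := by
    apply Finsupp.sum_congr
    intro u _
    rw [Finsupp.sum_single_index (by simp)]
    simp
  rw [h1]
  rw [show eps (x.sum fun u cu => cu • B.muB u v)
      = epsHom (x.sum fun u cu => cu • B.muB u v) from rfl, map_finsuppSum]
  apply Finsupp.sum_congr
  intro u _
  exact eps_smul _ _

lemma sum_coeff (x : EC N) (g : B N → ℚ) (t : Finset (B N)) (hg : ∀ u, g u ≠ 0 → u ∈ t) :
    (x.sum fun u cu => cu * g u) = ∑ u ∈ t, x u * g u := by
  rw [Finsupp.sum]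
  have h1 : ∑ u ∈ x.support, x u * g u = ∑ u ∈ x.support ∪ t, x u * g u :=
    Finset.sum_subset Finset.subset_union_left
      (fun u _ hu => by rw [Finsupp.notMem_support_iff.mp hu, zero_mul])
  have h2 : ∑ u ∈ t, x u * g u = ∑ u ∈ x.support ∪ t, x u * g u :=
    Finset.sum_subset Finset.subset_union_right
      (fun u _ hu => by rw [not_not.mp (fun h => hu (hg u h)), mul_zero])
  rw [h1, h2]

lemma one_ne_zero' (hN : 3 ≤ N) : (1 : ZMod N) ≠ 0 := by
  haveI : Fact (1 < N) := ⟨by omega⟩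
  exact one_ne_zero

lemma eps_zero : eps (0 : EC N) = 0 := by simp [eps]

lemma eps_neg (z : EC N) : eps (-z) = - eps z := map_neg (epsHom (N := N)) z

lemma eps_muB_P (b : ZMod N) (u : B N) :
    eps (B.muB u (B.P b)) =
      if u = B.S b ∨ u = B.S (b-1) then 1/2 else if u = B.I b then 1/4 else 0 := by
  cases u with
  | P a => simp [B.muB, eps]
  | S c =>
    simp only [B.muB]
    by_cases h : c = b ∨ c = b - 1
    · rw [if_pos h, eps_single,
        if_pos (by rcases h with h | h <;> simp [h])]
      simp [B.epsB]
    · push_neg at h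
      rw [if_neg (by push_neg; exact h),
        if_neg (by simp [B.S.injEq, h.1, h.2]), if_neg (by simp)]
      exact eps_zero
  | I c =>
    simp only [B.muB]
    rw [if_neg (show ¬(B.I c = B.S b ∨ B.I c = B.S (b-1)) by simp)]
    by_cases h : c = b
    · subst h
      rw [if_pos rfl, if_pos rfl, eps_single]
      simp [B.epsB]
    · rw [if_neg h, if_neg (by simp [B.I.injEq, h])]
      exact eps_zero

lemma eps_muB_S (b : ZMod N) (u : B N) :
    eps (B.muB u (B.S b)) =
      if u = B.P b ∨ u = B.P (b+1) then 1/2 else 0 := by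
  cases u with
  | P a =>
    simp only [B.muB]
    have hiff : (b = a ∨ b = a - 1) ↔ (B.P a = B.P b ∨ B.P a = B.P (b+1)) := by
      simp only [B.P.injEq]
      constructor
      · rintro (h | h)
        · exact Or.inl h.symm
        · right; rw [h]; ring
      · rintro (h | h)
        · exact Or.inl h.symm
        · right; rw [h]; ring
    by_cases h : b = a ∨ b = a - 1
    · rw [if_pos h, eps_single, if_pos (hiff.mp h)]
      simp [B.epsB]
    · rw [if_neg h, if_neg (fun hh => h (hiff.mpr hh))]
      exact eps_zero
  | S c =>
    simp only [B.muB]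
    rw [if_neg (show ¬(B.S c = B.P b ∨ B.S c = B.P (b+1)) by simp)]
    split_ifs <;> simp [eps_add, eps_neg, eps_single, B.epsB, eps_zero]
  | I c =>
    simp only [B.muB]
    rw [if_neg (show ¬(B.I c = B.P b ∨ B.I c = B.P (b+1)) by simp)]
    split_ifs <;> simp [eps_single, B.epsB, eps_zero]

lemma pairP (hN : 3 ≤ N) (x : EC N) (b : ZMod N) :
    pair x (Finsupp.single (B.P b) 1)
      = x (B.S b) * (1/2) + x (B.S (b-1)) * (1/2) + x (B.I b) * (1/4) := by
  have hb : (b - 1 : ZMod N) ≠ b := fun h => one_ne_zero' hN (sub_eq_self.mp h)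
  rw [pair_single, sum_coeff x _ ({B.S b, B.S (b-1), B.I b} : Finset (B N))
    (by
      intro u hu
      rw [eps_muB_P] at hu
      simp only [Finset.mem_insert, Finset.mem_singleton]
      split_ifs at hu with h1 h2
      · rcases h1 with h1 | h1
        · exact Or.inl h1
        · exact Or.inr (Or.inl h1)
      · exact Or.inr (Or.inr h2)
      · exact absurd rfl hu)]
  rw [Finset.sum_insert (by
      simp only [Finset.mem_insert, Finset.mem_singleton, B.S.injEq]
      push_neg
      exact ⟨fun h => hb h.symm, by simp⟩),
    Finset.sum_insert (by simp), Finset.sum_singleton]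
  rw [eps_muB_P, eps_muB_P, eps_muB_P,
    if_pos (Or.inl rfl), if_pos (Or.inr rfl),
    if_neg (by simp), if_pos rfl]
  ring

lemma pairS (hN : 3 ≤ N) (x : EC N) (b : ZMod N) :
    pair x (Finsupp.single (B.S b) 1)
      = x (B.P b) * (1/2) + x (B.P (b+1)) * (1/2) := by
  have hb : b ≠ b + 1 := fun h => one_ne_zero' hN (by
    have := left_eq_add.mp h
    exact this)
  rw [pair_single, sum_coeff x _ ({B.P b, B.P (b+1)} : Finset (B N))
    (by
      intro u hu
      rw [eps_muB_S] at hu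
      simp only [Finset.mem_insert, Finset.mem_singleton]
      split_ifs at hu with h1
      · exact h1
      · exact absurd rfl hu)]
  rw [Finset.sum_insert (by simp [B.P.injEq, hb]), Finset.sum_singleton]
  rw [eps_muB_S, eps_muB_S, if_pos (Or.inl rfl), if_pos (Or.inr rfl)]

lemma alt_zero (hodd : Odd N) (f : ZMod N → ℚ) (h : ∀ b, f b + f (b+1) = 0) :
    ∀ b, f b = 0 := by
  have key : ∀ n : ℕ, ∀ b : ZMod N, f (b + n) = (-1:ℚ)^n * f b := by
    intro n
    induction n with
    | zero => simp
    | succ n ih =>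
      intro b
      have harg : (b + ((n+1 : ℕ) : ZMod N)) = (b + n) + 1 := by push_cast; ring
      rw [harg]
      have h2 := h (b + n)
      rw [ih b] at h2
      rw [pow_succ]
      linarith
  intro b
  have hkey := key N b
  rw [ZMod.natCast_self, add_zero, Odd.neg_one_pow hodd] at hkey
  linarith

lemma coeff_I_zero {x : EC N} (hx : x ∈ Csub N) (a : ZMod N) : x (B.I a) = 0 := by
  have hle : Csub N ≤ LinearMap.ker (Finsupp.lapply (B.I a) : EC N →ₗ[ℚ] ℚ) := by
    rw [Csub, Submodule.span_le]
    rintro y (⟨c, rfl⟩ | ⟨c, rfl⟩) <;>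
      simp [LinearMap.mem_ker, Finsupp.single_apply]
  exact hle hx

end Aux

/-- for odd period the augmentation pairing is non-degenerate on `C_N`. -/
theorem pair_nondegenerate (N : ℕ) (hN : 3 ≤ N) (hodd : Odd N) :
    ∀ x ∈ Csub N, (∀ y ∈ Csub N, pair x y = 0) → x = 0 := by
  intro x hx hpair
  have hgenP : ∀ b : ZMod N, Finsupp.single (B.P b) (1:ℚ) ∈ Csub N := fun b =>
    Submodule.subset_span (Set.mem_union_left _ ⟨b, rfl⟩)
  have hgenS : ∀ b : ZMod N, Finsupp.single (B.S b) (1:ℚ) ∈ Csub N := fun b =>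
    Submodule.subset_span (Set.mem_union_right _ ⟨b, rfl⟩)
  have hI : ∀ a, x (B.I a) = 0 := fun a => Aux.coeff_I_zero hx a
  have hSsum : ∀ b, x (B.S b) + x (B.S (b+1)) = 0 := by
    intro b
    have h := hpair _ (hgenP (b+1))
    rw [Aux.pairP hN x (b+1)] at h
    rw [show (b+1-1 : ZMod N) = b by ring, hI (b+1)] at h
    linarith
  have hPsum : ∀ b, x (B.P b) + x (B.P (b+1)) = 0 := by
    intro b
    have h := hpair _ (hgenS b)
    rw [Aux.pairS hN x b] at h
    linarith
  have hS0 := Aux.alt_zero hodd (fun b => x (B.S b)) hSsum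
  have hP0 := Aux.alt_zero hodd (fun b => x (B.P b)) hPsum
  ext u
  cases u with
  | P a => simpa using hP0 a
  | S a => simpa using hS0 a
  | I a => simpa using hI a
end

section
/- The product μ agrees with the signed geometric intersection on pairs of sticks in general position: let a, b, c, d be integers and write X(p, q) = Σ_{i=p}^{q−1} S [i] ∈ EC_N for integers p < q (brackets denote reduction mod N). (i) If a < c < b < d and d − a < N, then μ(X(a, b), X(c, d)) = X(c, b). (ii) If a < c < d < b and b − a < N, then μ(X(a, b), X(c, d)) = X(c, d). -/
/-- The long stick `X(p,q) = Σ_{i=p}^{q-1} S [i]`. -/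
noncomputable def X (N : ℕ) (p q : ℤ) : EC N :=
  ∑ i ∈ Finset.Ico p q, Finsupp.single (B.S ((i : ℤ) : ZMod N)) (1 : ℚ)

namespace Aux

variable {N : ℕ}

lemma mu_zero_left (y : EC N) : mu 0 y = 0 := by simp [mu]

lemma mu_zero_right (x : EC N) : mu x 0 = 0 := by simp [mu]

lemma mu_add_left (x x' y : EC N) : mu (x + x') y = mu x y + mu x' y := by
  unfold mu
  rw [Finsupp.sum_add_index]
  · intro u _
    simp
  · intro u _ c1 c2
    rw [← Finsupp.sum_add]
    congr 1
    ext v cv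
    rw [add_mul, add_smul]

lemma mu_add_right (x y y' : EC N) : mu x (y + y') = mu x y + mu x y' := by
  unfold mu
  rw [← Finsupp.sum_add]
  congr 1
  ext u cu
  rw [Finsupp.sum_add_index]
  · intro v _; simp
  · intro v _ c1 c2; rw [mul_add, add_smul]

lemma mu_single_single (u v : B N) :
    mu (Finsupp.single u 1) (Finsupp.single v 1) = B.muB u v := by
  unfold mu
  rw [Finsupp.sum_single_index (by simp), Finsupp.sum_single_index (by simp)]
  simp

lemma mu_sum_left {ι : Type*} (s : Finset ι) (f : ι → EC N) (y : EC N) :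
    mu (∑ i ∈ s, f i) y = ∑ i ∈ s, mu (f i) y := by
  induction s using Finset.cons_induction with
  | empty => simp [mu_zero_left]
  | cons i s hi ih => simp [Finset.sum_cons, mu_add_left, ih]

lemma mu_sum_right {ι : Type*} (x : EC N) (t : Finset ι) (g : ι → EC N) :
    mu x (∑ j ∈ t, g j) = ∑ j ∈ t, mu x (g j) := by
  induction t using Finset.cons_induction with
  | empty => simp [mu_zero_right]
  | cons j t hj ih => simp [Finset.sum_cons, mu_add_right, ih]

lemma mu_sum_sum {ι κ : Type*} (s : Finset ι) (t : Finset κ) (f : ι → B N) (g : κ → B N) :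
    mu (∑ i ∈ s, Finsupp.single (f i) 1) (∑ j ∈ t, Finsupp.single (g j) 1)
      = ∑ i ∈ s, ∑ j ∈ t, B.muB (f i) (g j) := by
  rw [mu_sum_left]
  refine Finset.sum_congr rfl fun i _ => ?_
  rw [mu_sum_right]
  exact Finset.sum_congr rfl fun j _ => mu_single_single _ _

end Aux
namespace Aux

variable {N : ℕ}

lemma cast_eq_iff (hN : 0 < N) {i j : ℤ} (h1 : -(N : ℤ) < j - i) (h2 : j - i < N) :
    ((j : ZMod N) = (i : ZMod N)) ↔ j = i := by
  constructor
  · intro h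
    have h0 : ((j - i : ℤ) : ZMod N) = 0 := by push_cast; rw [h]; ring
    have hd : (N : ℤ) ∣ j - i := (ZMod.intCast_zmod_eq_zero_iff_dvd _ _).mp h0
    have := Int.eq_zero_of_abs_lt_dvd hd (abs_lt.mpr ⟨h1, h2⟩)
    omega
  · rintro rfl; rfl

/-- `fI i = I [i]`, `fS i = S [i]` as elements of `EC N`. -/
noncomputable def fI (N : ℕ) (i : ℤ) : EC N := Finsupp.single (B.I ((i : ℤ) : ZMod N)) 1
noncomputable def fS (N : ℕ) (i : ℤ) : EC N := Finsupp.single (B.S ((i : ℤ) : ZMod N)) 1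

noncomputable def Dia (N : ℕ) (i : ℤ) : EC N := -fI N i + fS N i - fI N (i + 1)

lemma muB_SS (hN : 0 < N) (i j : ℤ) (h1 : -(N : ℤ) + 1 < j - i) (h2 : j - i < (N : ℤ) - 1) :
    B.muB (B.S ((i : ℤ) : ZMod N)) (B.S ((j : ℤ) : ZMod N))
      = (if j = i then Dia N i else 0) + (if j = i + 1 then fI N (i + 1) else 0)
        + (if j = i - 1 then fI N i else 0) := by
  have e1 : ((i : ZMod N) + 1) = ((i + 1 : ℤ) : ZMod N) := by push_cast; ring
  have e2 : ((i : ZMod N) - 1) = ((i - 1 : ℤ) : ZMod N) := by push_cast; ring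
  have c0 : ((j : ZMod N) = (i : ZMod N)) ↔ j = i :=
    cast_eq_iff hN (by omega) (by omega)
  have c1 : ((j : ZMod N) = (i + 1 : ℤ)) ↔ j = i + 1 :=
    cast_eq_iff hN (by omega) (by omega)
  have c2 : ((j : ZMod N) = (i - 1 : ℤ)) ↔ j = i - 1 :=
    cast_eq_iff hN (by omega) (by omega)
  show (if (j : ZMod N) = (i : ZMod N) then _ else _) = _
  rw [e1, e2]
  simp only [c0, c1, c2]
  by_cases g0 : j = i
  · subst g0
    rw [if_pos rfl, if_pos rfl, if_neg (by omega : ¬ (j:ℤ) = j + 1),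
      if_neg (by omega : ¬ (j:ℤ) = j - 1), add_zero, add_zero]
    simp only [Dia, fI, fS, Finsupp.single_neg]
    abel
  · rw [if_neg g0, if_neg g0]
    by_cases g1 : j = i + 1
    · rw [if_pos g1, if_pos g1, if_neg (by omega : ¬ j = i - 1), zero_add, add_zero]
      rfl
    · rw [if_neg g1, if_neg g1]
      by_cases g2 : j = i - 1
      · rw [if_pos g2, if_pos g2, zero_add, zero_add]
        rfl
      · rw [if_neg g2, if_neg g2]
        simp

end Aux
namespace Aux

variable {N : ℕ}

lemma Ico_shift (f : ℤ → EC N) (p q : ℤ) :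
    ∑ i ∈ Finset.Ico p q, f (i + 1) = ∑ i ∈ Finset.Ico (p + 1) (q + 1), f i := by
  rw [← Finset.map_add_right_Ico, Finset.sum_map]
  rfl

lemma Ico_insert_top {p q : ℤ} (h : p ≤ q) :
    Finset.Ico p (q + 1) = insert q (Finset.Ico p q) := by
  ext x
  simp only [Finset.mem_Ico, Finset.mem_insert]
  omega

lemma sum_Ico_top (f : ℤ → EC N) {p q : ℤ} (h : p ≤ q) :
    ∑ i ∈ Finset.Ico p (q + 1), f i = (∑ i ∈ Finset.Ico p q, f i) + f q := by
  rw [Ico_insert_top h, Finset.sum_insert (by simp)]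
  abel

lemma key (hN : 0 < N) (a b c d : ℤ)
    (hb : ∀ i j : ℤ, a ≤ i → i < b → c ≤ j → j < d →
      -(N : ℤ) + 1 < j - i ∧ j - i < (N : ℤ) - 1) :
    mu (X N a b) (X N c d) =
      (∑ i ∈ (Finset.Ico a b).filter (· ∈ Finset.Ico c d), Dia N i)
      + (∑ i ∈ (Finset.Ico a b).filter (fun i => i + 1 ∈ Finset.Ico c d), fI N (i + 1))
      + (∑ i ∈ (Finset.Ico a b).filter (fun i => i - 1 ∈ Finset.Ico c d), fI N i) := by
  rw [X, X, mu_sum_sum]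
  rw [Finset.sum_filter, Finset.sum_filter, Finset.sum_filter,
    ← Finset.sum_add_distrib, ← Finset.sum_add_distrib]
  refine Finset.sum_congr rfl fun i hi => ?_
  rw [Finset.mem_Ico] at hi
  have step : ∀ j ∈ Finset.Ico c d,
      B.muB (B.S ((i : ℤ) : ZMod N)) (B.S ((j : ℤ) : ZMod N))
        = (if j = i then Dia N i else 0) + (if j = i + 1 then fI N (i + 1) else 0)
          + (if j = i - 1 then fI N i else 0) := by
    intro j hj
    rw [Finset.mem_Ico] at hj
    obtain ⟨u1, u2⟩ := hb i j hi.1 hi.2 hj.1 hj.2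
    exact muB_SS hN i j u1 u2
  rw [Finset.sum_congr rfl step, Finset.sum_add_distrib, Finset.sum_add_distrib,
    Finset.sum_ite_eq', Finset.sum_ite_eq', Finset.sum_ite_eq']

end Aux
namespace Aux

variable {N : ℕ}

lemma X_eq_sum_fS (p q : ℤ) : X N p q = ∑ i ∈ Finset.Ico p q, fS N i := rfl

lemma case_one (hN : 3 ≤ N) (a b c d : ℤ) (hac : a < c) (hcb : c < b) (hbd : b < d)
    (hda : d - a < (N : ℤ)) : mu (X N a b) (X N c d) = X N c b := by
  rw [key (by omega) a b c d (fun i j h1 h2 h3 h4 => by omega)]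
  have f1 : (Finset.Ico a b).filter (· ∈ Finset.Ico c d) = Finset.Ico c b := by
    ext x; simp only [Finset.mem_filter, Finset.mem_Ico]; omega
  have f2 : (Finset.Ico a b).filter (fun i => i + 1 ∈ Finset.Ico c d)
      = Finset.Ico (c - 1) b := by
    ext x; simp only [Finset.mem_filter, Finset.mem_Ico]; omega
  have f3 : (Finset.Ico a b).filter (fun i => i - 1 ∈ Finset.Ico c d)
      = Finset.Ico (c + 1) b := by
    ext x; simp only [Finset.mem_filter, Finset.mem_Ico]; omega
  rw [f1, f2, f3]
  have s1 : ∑ i ∈ Finset.Ico c b, fI N (i + 1)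
      = (∑ i ∈ Finset.Ico (c + 1) b, fI N i) + fI N b := by
    rw [Ico_shift (fI N) c b, ← sum_Ico_top (fI N) (by omega : c + 1 ≤ b)]
  have s2 : ∑ i ∈ Finset.Ico (c - 1) b, fI N (i + 1)
      = (∑ i ∈ Finset.Ico c b, fI N i) + fI N b := by
    rw [Ico_shift (fI N) (c - 1) b]
    have : c - 1 + 1 = c := by omega
    rw [this, sum_Ico_top (fI N) (by omega : c ≤ b)]
  have expand : ∑ i ∈ Finset.Ico c b, Dia N i
      = -(∑ i ∈ Finset.Ico c b, fI N i) + (∑ i ∈ Finset.Ico c b, fS N i)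
        - (∑ i ∈ Finset.Ico c b, fI N (i + 1)) := by
    simp only [Dia, Finset.sum_add_distrib, Finset.sum_sub_distrib, Finset.sum_neg_distrib]
  rw [expand, s1, s2, X_eq_sum_fS]
  abel

lemma case_two (hN : 3 ≤ N) (a b c d : ℤ) (hac : a < c) (hcd : c < d) (hdb : d < b)
    (hba : b - a < (N : ℤ)) : mu (X N a b) (X N c d) = X N c d := by
  rw [key (by omega) a b c d (fun i j h1 h2 h3 h4 => by omega)]
  have f1 : (Finset.Ico a b).filter (· ∈ Finset.Ico c d) = Finset.Ico c d := by
    ext x; simp only [Finset.mem_filter, Finset.mem_Ico]; omega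
  have f2 : (Finset.Ico a b).filter (fun i => i + 1 ∈ Finset.Ico c d)
      = Finset.Ico (c - 1) (d - 1) := by
    ext x; simp only [Finset.mem_filter, Finset.mem_Ico]; omega
  have f3 : (Finset.Ico a b).filter (fun i => i - 1 ∈ Finset.Ico c d)
      = Finset.Ico (c + 1) (d + 1) := by
    ext x; simp only [Finset.mem_filter, Finset.mem_Ico]; omega
  rw [f1, f2, f3]
  have s1 : ∑ i ∈ Finset.Ico c d, fI N (i + 1)
      = ∑ i ∈ Finset.Ico (c + 1) (d + 1), fI N i := Ico_shift (fI N) c d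
  have s2 : ∑ i ∈ Finset.Ico (c - 1) (d - 1), fI N (i + 1)
      = ∑ i ∈ Finset.Ico c d, fI N i := by
    rw [Ico_shift (fI N) (c - 1) (d - 1)]
    have h1 : c - 1 + 1 = c := by omega
    have h2 : d - 1 + 1 = d := by omega
    rw [h1, h2]
  have expand : ∑ i ∈ Finset.Ico c d, Dia N i
      = -(∑ i ∈ Finset.Ico c d, fI N i) + (∑ i ∈ Finset.Ico c d, fS N i)
        - (∑ i ∈ Finset.Ico c d, fI N (i + 1)) := by
    simp only [Dia, Finset.sum_add_distrib, Finset.sum_sub_distrib, Finset.sum_neg_distrib]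
  rw [expand, s1, s2, X_eq_sum_fS]
  abel

end Aux


/-- the product agrees with the signed geometric intersection on pairs of
long sticks in general position: (i) `a < c < b < d`, `d - a < N` gives `X c b`;
(ii) `a < c < d < b`, `b - a < N` gives `X c d`. -/
theorem mu_sticks_general_position (N : ℕ) (hN : 3 ≤ N) :
    (∀ a b c d : ℤ, a < c → c < b → b < d → d - a < (N : ℤ) →
      mu (X N a b) (X N c d) = X N c b) ∧
    (∀ a b c d : ℤ, a < c → c < d → d < b → b - a < (N : ℤ) →
      mu (X N a b) (X N c d) = X N c d) := by
  constructor
  · intro a b c d h1 h2 h3 h4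
    exact Aux.case_one hN a b c d h1 h2 h3 h4
  · intro a b c d h1 h2 h3 h4
    exact Aux.case_two hN a b c d h1 h2 h3 h4
end

section
/- The three-dimensional transverse intersection product μ₃ on the enlarged complex E3_N is associative: for all x, y, z ∈ E3_N, μ₃(μ₃(x, y), z) = μ₃(x, μ₃(y, z)). -/
/-- Basis triples for the three-dimensional complex. -/
abbrev B3 (N : ℕ) : Type := B N × B N × B N

/-- The enlarged three-dimensional chain complex: free ℚ-vector space on `B3 N`. -/
abbrev E3 (N : ℕ) : Type := B3 N →₀ ℚ

/-- Codimension of a basis triple. -/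
def cod3 {N : ℕ} (u : B3 N) : ℕ := u.1.cod + u.2.1.cod + u.2.2.cod

/-- Basis triple viewed in `E3 N`. -/
noncomputable def e3 {N : ℕ} (u : B3 N) : E3 N := Finsupp.single u 1

/-- Trilinear map `EC N → EC N → EC N → E3 N`, `x ⊗ y ⊗ z`. -/
noncomputable def t3 {N : ℕ} (x y z : EC N) : E3 N :=
  x.sum fun u₁ c₁ => y.sum fun u₂ c₂ => z.sum fun u₃ c₃ =>
    Finsupp.single (u₁, u₂, u₃) (c₁ * c₂ * c₃)

/-- The three-dimensional intersection product on basis triples, with Koszul sign. -/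
noncomputable def mu3B {N : ℕ} (u v : B3 N) : E3 N :=
  ((-1 : ℚ) ^ (u.2.1.cod * v.1.cod + u.2.2.cod * v.1.cod + u.2.2.cod * v.2.1.cod)) •
    t3 (B.muB u.1 v.1) (B.muB u.2.1 v.2.1) (B.muB u.2.2 v.2.2)

/-- Bilinear extension of the three-dimensional product to `E3 N`. -/
noncomputable def mu3 {N : ℕ} (x y : E3 N) : E3 N :=
  x.sum fun u cu => y.sum fun v cv => (cu * cv) • mu3B u v

/-- The three-dimensional boundary on basis triples. -/
noncomputable def bd3B {N : ℕ} (u : B3 N) : E3 N :=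
  t3 (B.bdB u.1) (B.e u.2.1) (B.e u.2.2)
    + ((-1 : ℚ) ^ u.1.cod) • t3 (B.e u.1) (B.bdB u.2.1) (B.e u.2.2)
    + ((-1 : ℚ) ^ (u.1.cod + u.2.1.cod)) • t3 (B.e u.1) (B.e u.2.1) (B.bdB u.2.2)

/-- Linear extension of the three-dimensional boundary to `E3 N`. -/
noncomputable def bd3 {N : ℕ} (x : E3 N) : E3 N := x.sum fun u cu => cu • bd3B u

/-- The three-dimensional augmentation `ε₃`. -/
noncomputable def eps3 {N : ℕ} (x : E3 N) : ℚ :=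
  x.sum fun u cu => cu * (B.epsB u.1 * B.epsB u.2.1 * B.epsB u.2.2)

/-- The three-dimensional augmentation pairing. -/
noncomputable def pair3 {N : ℕ} (x y : E3 N) : ℚ := eps3 (mu3 x y)

/-!
Both `mu` and `mu3` are bilinear extensions of products of basis elements, so associativity
only has to be checked on basis elements. For `mu` this is a finite case analysis on the
relative position of the indices, which needs `N ≥ 3` to keep `a - 1`, `a`, `a + 1` distinct.
The product `mu` is homogeneous for the codimension grading, so on basis triples the Koszul
signs of `(u v) w` and `u (v w)` are powers of `-1` with the same exponent, and the identity
reduces factorwise to the associativity of `mu`.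
-/

namespace Finsupp

variable {R α : Type*} [CommSemiring R]

noncomputable def linearCombination₂ (f : α → α → α →₀ R) :
    (α →₀ R) →ₗ[R] (α →₀ R) →ₗ[R] α →₀ R :=
  linearCombination R fun u => linearCombination R (f u)

theorem linearCombination₂_apply (f : α → α → α →₀ R) (x y : α →₀ R) :
    linearCombination₂ f x y = x.sum fun u c => y.sum fun v d => (c * d) • f u v := by
  simp only [linearCombination₂, linearCombination_apply, LinearMap.sum_apply,
    LinearMap.smul_apply, Finsupp.sum, Finset.smul_sum, smul_smul]

theorem linearCombination₂_single_single (f : α → α → α →₀ R) (u v : α) (c d : R) :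
    linearCombination₂ f (single u c) (single v d) = (c * d) • f u v := by
  simp [linearCombination₂, smul_smul]

theorem linearCombination₂_single_left (f : α → α → α →₀ R) (u : α) (y : α →₀ R) :
    linearCombination₂ f (single u 1) y = linearCombination R (f u) y := by
  simp [linearCombination₂]

theorem linearCombination₂_single_right (f : α → α → α →₀ R) (x : α →₀ R) (v : α) :
    linearCombination₂ f x (single v 1) = linearCombination R (fun u => f u v) x := by
  simp [linearCombination₂, linearCombination_apply]

end Finsupp

theorem LinearMap.assoc_of_basis {R M ι : Type*} [CommSemiring R] [AddCommMonoid M] [Module R M]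
    (b : Module.Basis ι R M) (μ : M →ₗ[R] M →ₗ[R] M)
    (h : ∀ i j k, μ (μ (b i) (b j)) (b k) = μ (b i) (μ (b j) (b k))) (x y z : M) :
    μ (μ x y) z = μ x (μ y z) := by
  have hk : ∀ i j, μ (μ (b i) (b j)) = μ (b i) ∘ₗ μ (b j) := fun i j => b.ext (h i j)
  have hij : μ.compr₂ (μ.flip z) = μ.compl₂ (μ.flip z) :=
    LinearMap.ext_basis b b fun i j => by simp [hk i j]
  simpa using congr($hij x y)

theorem ZMod.add_one_add_one_ne_self {n : ℕ} (hn : 3 ≤ n) (x : ZMod n) : x + 1 + 1 ≠ x := by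
  intro h
  have h2 : ((2 : ℕ) : ZMod n) = 0 := by push_cast; linear_combination h
  have := Nat.le_of_dvd two_pos ((ZMod.natCast_eq_zero_iff 2 n).1 h2)
  omega

section

variable {N : ℕ}

open Finsupp

theorem mu_eq_linearCombination₂ (x y : EC N) : mu x y = linearCombination₂ B.muB x y :=
  (linearCombination₂_apply _ x y).symm

theorem mu3_eq_linearCombination₂ (x y : E3 N) : mu3 x y = linearCombination₂ mu3B x y :=
  (linearCombination₂_apply _ x y).symm

theorem mu_e_right (x : EC N) (w : B N) :
    mu x (B.e w) = linearCombination ℚ (fun b => B.muB b w) x := by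
  rw [mu_eq_linearCombination₂, B.e, linearCombination₂_single_right]

theorem mu_e_left (u : B N) (x : EC N) : mu (B.e u) x = linearCombination ℚ (B.muB u) x := by
  rw [mu_eq_linearCombination₂, B.e, linearCombination₂_single_left]

theorem mu3_e3_right (x : E3 N) (w : B3 N) :
    mu3 x (e3 w) = linearCombination ℚ (fun u => mu3B u w) x := by
  rw [mu3_eq_linearCombination₂, e3, linearCombination₂_single_right]

theorem mu3_e3_left (u : B3 N) (x : E3 N) : mu3 (e3 u) x = linearCombination ℚ (mu3B u) x := by
  rw [mu3_eq_linearCombination₂, e3, linearCombination₂_single_left]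

theorem B.single_eq_smul_e (u : B N) (r : ℚ) : single u r = r • B.e u := by
  rw [B.e, smul_single_one]

-- Rewriting `b = a - 1` as `b + 1 = a` before `subst` keeps every index of the form `x + 1 + 1`,
-- so the impossible branches are exactly those asserting `x + 1 = x` or `x + 1 + 1 = x`.
set_option maxHeartbeats 1000000 in
theorem muB_assoc (hN : 3 ≤ N) (u v w : B N) :
    mu (B.muB u v) (B.e w) = mu (B.e u) (B.muB v w) := by
  have : Fact (1 < N) := ⟨by omega⟩
  have h2 := ZMod.add_one_add_one_ne_self hN
  have h2' : ∀ x : ZMod N, x ≠ x + 1 + 1 := fun x h => h2 x h.symm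
  rcases u with a | a | a <;> rcases v with b | b | b <;> rcases w with c | c | c <;>
    simp only [B.muB, B.e, eq_sub_iff_add_eq] <;> (try split_ifs) <;> (try casesm* _ ∨ _) <;>
    subst_vars <;>
    simp only [mu_eq_linearCombination₂, map_add, map_zero, LinearMap.add_apply,
      LinearMap.zero_apply, linearCombination₂_single_single, B.muB, eq_sub_iff_add_eq] <;>
    (try split_ifs) <;> (try casesm* _ ∨ _) <;> subst_vars <;>
    (try simp only [add_left_inj] at *) <;> subst_vars <;>
    first
    | (exfalso; simp [h2, h2'] at *; done)
    | ((try simp only [B.single_eq_smul_e]); module)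

def EC.homogeneous (N k : ℕ) : Submodule ℚ (EC N) := supported ℚ ℚ {b | b.cod = k}

theorem muB_mem_homogeneous (u v : B N) : B.muB u v ∈ EC.homogeneous N (u.cod + v.cod) := by
  cases u <;> cases v <;> simp only [B.muB] <;> (try split_ifs) <;>
    apply_rules [Submodule.add_mem, Submodule.zero_mem, single_mem_supported]

noncomputable def t3ₗ : EC N →ₗ[ℚ] EC N →ₗ[ℚ] EC N →ₗ[ℚ] E3 N :=
  linearCombination ℚ fun u₁ => linearCombination ℚ fun u₂ => linearCombination ℚ fun u₃ =>
    single (u₁, u₂, u₃) 1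

theorem t3_eq_t3ₗ (x y z : EC N) : t3 x y z = t3ₗ x y z := by
  simp only [t3, t3ₗ, linearCombination_apply, LinearMap.finsupp_sum_apply, LinearMap.smul_apply,
    Finsupp.smul_sum, smul_single, smul_eq_mul, mul_one, mul_assoc]

theorem t3_linearCombination (f₁ f₂ f₃ : B N → EC N) (X Y Z : EC N) :
    t3 (linearCombination ℚ f₁ X) (linearCombination ℚ f₂ Y) (linearCombination ℚ f₃ Z) =
      X.sum fun b₁ c₁ => Y.sum fun b₂ c₂ => Z.sum fun b₃ c₃ =>
        (c₁ * c₂ * c₃) • t3 (f₁ b₁) (f₂ b₂) (f₃ b₃) := by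
  rw [t3_eq_t3ₗ, linearCombination_apply ℚ X, map_finsuppSum, LinearMap.finsupp_sum_apply,
    LinearMap.finsupp_sum_apply]
  refine Finsupp.sum_congr fun b₁ _ => ?_
  rw [linearCombination_apply, map_smul, LinearMap.smul_apply, LinearMap.smul_apply,
    map_finsuppSum, LinearMap.finsupp_sum_apply, Finsupp.smul_sum]
  refine Finsupp.sum_congr fun b₂ _ => ?_
  rw [linearCombination_apply, map_smul, LinearMap.smul_apply, map_finsuppSum, Finsupp.smul_sum,
    Finsupp.smul_sum]
  refine Finsupp.sum_congr fun b₃ _ => ?_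
  rw [map_smul, smul_smul, smul_smul, ← t3_eq_t3ₗ, mul_assoc]

theorem linearCombination_t3 (g : B3 N → E3 N) (X Y Z : EC N) :
    linearCombination ℚ g (t3 X Y Z) =
      X.sum fun b₁ c₁ => Y.sum fun b₂ c₂ => Z.sum fun b₃ c₃ => (c₁ * c₂ * c₃) • g (b₁, b₂, b₃) := by
  simp only [t3, map_finsuppSum, linearCombination_single]

theorem mu3_t3_e3 {k₂ k₃ : ℕ} (X : EC N) {Y Z : EC N} (hY : Y ∈ EC.homogeneous N k₂)
    (hZ : Z ∈ EC.homogeneous N k₃) (w : B3 N) :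
    mu3 (t3 X Y Z) (e3 w) = (-1 : ℚ) ^ (k₂ * w.1.cod + k₃ * w.1.cod + k₃ * w.2.1.cod) •
      t3 (mu X (B.e w.1)) (mu Y (B.e w.2.1)) (mu Z (B.e w.2.2)) := by
  rw [mu3_e3_right, linearCombination_t3, mu_e_right, mu_e_right, mu_e_right,
    t3_linearCombination, Finsupp.smul_sum]
  refine Finsupp.sum_congr fun b₁ _ => ?_
  rw [Finsupp.smul_sum]
  refine Finsupp.sum_congr fun b₂ hb₂ => ?_
  rw [Finsupp.smul_sum]
  refine Finsupp.sum_congr fun b₃ hb₃ => ?_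
  rw [mu3B, show b₂.cod = k₂ from hY hb₂, show b₃.cod = k₃ from hZ hb₃, smul_comm]

theorem mu3_e3_t3 {k₁ k₂ : ℕ} {X Y : EC N} (Z : EC N) (hX : X ∈ EC.homogeneous N k₁)
    (hY : Y ∈ EC.homogeneous N k₂) (u : B3 N) :
    mu3 (e3 u) (t3 X Y Z) = (-1 : ℚ) ^ (u.2.1.cod * k₁ + u.2.2.cod * k₁ + u.2.2.cod * k₂) •
      t3 (mu (B.e u.1) X) (mu (B.e u.2.1) Y) (mu (B.e u.2.2) Z) := by
  rw [mu3_e3_left, linearCombination_t3, mu_e_left, mu_e_left, mu_e_left,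
    t3_linearCombination, Finsupp.smul_sum]
  refine Finsupp.sum_congr fun b₁ hb₁ => ?_
  rw [Finsupp.smul_sum]
  refine Finsupp.sum_congr fun b₂ hb₂ => ?_
  rw [Finsupp.smul_sum]
  refine Finsupp.sum_congr fun b₃ _ => ?_
  rw [mu3B, show b₁.cod = k₁ from hX hb₁, show b₂.cod = k₂ from hY hb₂, smul_comm]

theorem mu3B_assoc (hN : 3 ≤ N) (u v w : B3 N) :
    mu3 (mu3B u v) (e3 w) = mu3 (e3 u) (mu3B v w) := by
  obtain ⟨u₁, u₂, u₃⟩ := u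
  obtain ⟨v₁, v₂, v₃⟩ := v
  obtain ⟨w₁, w₂, w₃⟩ := w
  rw [mu3B, mu3B, mu3_eq_linearCombination₂, mu3_eq_linearCombination₂, map_smul, map_smul,
    LinearMap.smul_apply, ← mu3_eq_linearCombination₂, ← mu3_eq_linearCombination₂,
    mu3_t3_e3 _ (muB_mem_homogeneous u₂ v₂) (muB_mem_homogeneous u₃ v₃),
    mu3_e3_t3 _ (muB_mem_homogeneous v₁ w₁) (muB_mem_homogeneous v₂ w₂),
    muB_assoc hN, muB_assoc hN, muB_assoc hN, smul_smul, smul_smul, ← pow_add, ← pow_add]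
  congr 2
  ring

end

/-- the three-dimensional intersection product is associative. -/
theorem mu3_assoc (N : ℕ) (hN : 3 ≤ N) :
    ∀ x y z : E3 N, mu3 (mu3 x y) z = mu3 x (mu3 y z) := by
  intro x y z
  simp only [mu3_eq_linearCombination₂]
  refine LinearMap.assoc_of_basis Finsupp.basisSingleOne _ (fun u v w => ?_) x y z
  simpa only [Finsupp.coe_basisSingleOne, Finsupp.linearCombination₂_single_left,
    Finsupp.linearCombination_single, one_smul, mu3_eq_linearCombination₂, e3]
    using mu3B_assoc hN u v w
end

section
/- On the three-dimensional cubical subcomplex C3_N (the span of basis triples with no infinitesimal component), the boundary satisfies the Leibniz product rule: for all basis triples u, v with no infinitesimal component, ∂₃(μ₃(u, v)) = μ₃(∂₃ u, v) + (−1)^(c(u)) μ₃(u, ∂₃ v). -/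
/-- Is a basis element an infinitesimal stick? -/
def isI {N : ℕ} : B N → Bool
  | .I _ => true
  | _ => false

/-- Is a basis element a point? -/
def isP {N : ℕ} : B N → Bool
  | .P _ => true
  | _ => false

/-- Number of infinitesimal components of a basis triple. -/
def nI {N : ℕ} (u : B3 N) : ℕ :=
  (if isI u.1 then 1 else 0) + (if isI u.2.1 then 1 else 0) + (if isI u.2.2 then 1 else 0)

/-- Number of point components of a basis triple. -/
def nP {N : ℕ} (u : B3 N) : ℕ :=
  (if isP u.1 then 1 else 0) + (if isP u.2.1 then 1 else 0) + (if isP u.2.2 then 1 else 0)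

/-- Membership of a basis triple in the generating set of `FC_N`: either no infinitesimal
component and at least one point component, or exactly one infinitesimal component and
two point components. -/
def inFC {N : ℕ} (u : B3 N) : Prop := (nI u = 0 ∧ 1 ≤ nP u) ∨ (nI u = 1 ∧ nP u = 2)

/-- The subcomplex `FC_N` of `E3 N`. -/
noncomputable def FCsub (N : ℕ) : Submodule ℚ (E3 N) :=
  Submodule.span ℚ {x : E3 N | ∃ u : B3 N, inFC u ∧ x = e3 u}

/-- A basis triple has no infinitesimal component. -/
def noInf {N : ℕ} (u : B3 N) : Prop := nI u = 0

/-- The three-dimensional cubical subcomplex `C3_N` of `E3 N`. -/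
noncomputable def C3sub (N : ℕ) : Submodule ℚ (E3 N) :=
  Submodule.span ℚ {x : E3 N | ∃ u : B3 N, noInf u ∧ x = e3 u}

/-!
Extend ∂, μ, ⊗, ∂₃, μ₃ linearly. On pure tensors, ∂₃ is a graded derivation of the three
factors, and μ₃ against a basis triple acts factorwise; in both cases the signs are Koszul
signs, recorded by `EC.twist`. On points and elemental sticks the one-dimensional boundary is a
derivation of μ; this is a finite check on pairs of sticks, where the shifts `±1, ±2` have to be
nonzero in `ZMod N`, i.e. `N ≥ 3`. Substituting these rules, both sides of the Leibniz rule for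
basis triples become the same combination of tensors of one-dimensional products, with signs
depending only on codimensions, which are `0` or `1`.
-/

open Finsupp

theorem B.cod_eq_zero_or_one {N : ℕ} (w : B N) : w.cod = 0 ∨ w.cod = 1 := by
  cases w <;> simp [B.cod]

theorem isI_eq_false_of_noInf {N : ℕ} {u : B3 N} (hu : noInf u) :
    isI u.1 = false ∧ isI u.2.1 = false ∧ isI u.2.2 = false := by
  simp only [noInf, nI] at hu
  split_ifs at hu <;> simp_all

section
variable {N : ℕ}

namespace EC

noncomputable def lbd : EC N →ₗ[ℚ] EC N := linearCombination ℚ B.bdB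

noncomputable def lmu : EC N →ₗ[ℚ] EC N →ₗ[ℚ] EC N :=
  linearCombination ℚ fun u => linearCombination ℚ (B.muB u)

noncomputable def lt3 : EC N →ₗ[ℚ] EC N →ₗ[ℚ] EC N →ₗ[ℚ] E3 N :=
  linearCombination ℚ fun a => linearCombination ℚ fun b => linearCombination ℚ fun c =>
    e3 (a, b, c)

/-- The sign a chain picks up when it is moved past a factor of codimension `n`. -/
noncomputable def twist (n : ℕ) : EC N →ₗ[ℚ] EC N :=
  linearCombination ℚ fun w => ((-1 : ℚ) ^ (w.cod * n)) • B.e w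

theorem t3_eq_lt3 (x y z : EC N) : t3 x y z = lt3 x y z := by
  simp only [t3, lt3, e3, linearCombination_apply, Finsupp.sum, LinearMap.sum_apply,
    LinearMap.smul_apply, Finset.smul_sum, smul_smul, smul_single, smul_eq_mul, mul_one]

theorem single_eq_smul_e (w : B N) (r : ℚ) : single w r = r • B.e w := by
  simp [B.e]

@[simp] theorem lbd_e (u : B N) : lbd (B.e u) = B.bdB u := by
  simp [lbd, B.e]

@[simp] theorem lmu_e_e (u v : B N) : lmu (B.e u) (B.e v) = B.muB u v := by
  simp [lmu, B.e]

@[simp] theorem lt3_e_e_e (a b c : B N) : lt3 (B.e a) (B.e b) (B.e c) = e3 (a, b, c) := by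
  simp [lt3, B.e]

@[simp] theorem twist_e (n : ℕ) (w : B N) :
    twist n (B.e w) = ((-1 : ℚ) ^ (w.cod * n)) • B.e w := by
  simp [twist, B.e]

theorem twist_bdB (n : ℕ) (u : B N) :
    twist n (B.bdB u) = ((-1 : ℚ) ^ ((u.cod + 1) * n)) • B.bdB u := by
  cases u <;> simp [twist, B.bdB, B.cod, B.e, smul_sub]

theorem twist_muB (n : ℕ) (u v : B N) :
    twist n (B.muB u v) = ((-1 : ℚ) ^ ((u.cod + v.cod) * n)) • B.muB u v := by
  cases u <;> cases v <;> simp only [B.muB] <;> (try split_ifs) <;>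
    simp [twist, B.cod, B.e, smul_single, mul_comm]

theorem lbd_muB_S_S (h2 : (2 : ZMod N) ≠ 0) (a b : ZMod N) :
    lbd (B.muB (.S a) (.S b))
      = lmu (B.bdB (.S a)) (B.e (.S b)) + lmu (B.e (.S a)) (B.bdB (.S b)) := by
  simp only [B.muB, B.bdB, single_eq_smul_e, one_smul, map_sub, LinearMap.sub_apply, lmu_e_e]
  -- A branch is either consistent, and then a linear identity, or its conditions force
  -- `1 = 0` or `2 = 0` in `ZMod N`.
  split_ifs <;> first
    | (exfalso; grind)
    | (subst_vars
       simp only [map_add, map_smul, map_zero, lbd_e, B.bdB, single_eq_smul_e, sub_add_cancel]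
       module)

theorem lbd_muB (h2 : (2 : ZMod N) ≠ 0) {u v : B N} (hu : isI u = false) (hv : isI v = false) :
    lbd (B.muB u v) = lmu (B.bdB u) (B.e v) + ((-1 : ℚ) ^ u.cod) • lmu (B.e u) (B.bdB v) := by
  cases u <;> cases v <;> simp only [isI, Bool.true_eq_false] at hu hv
  case S.S a b => simpa [B.cod] using lbd_muB_S_S h2 a b
  all_goals simp [B.muB, B.bdB, B.cod, single_eq_smul_e, apply_ite lbd]

theorem induction_linear₃ {p : EC N → EC N → EC N → Prop}
    (add₁ : ∀ x x' y z, p x y z → p x' y z → p (x + x') y z)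
    (add₂ : ∀ x y y' z, p x y z → p x y' z → p x (y + y') z)
    (add₃ : ∀ x y z z', p x y z → p x y z' → p x y (z + z'))
    (basis : ∀ a b c (r s t : ℚ), p (single a r) (single b s) (single c t))
    (x y z : EC N) : p x y z := by
  have zero_eq : (0 : EC N) = single (B.P 0) 0 := (single_zero _).symm
  have h₂ : ∀ a b r s z, p (single a r) (single b s) z := fun a b r s z => by
    induction z using Finsupp.induction_linear with
    | zero => rw [zero_eq]; exact basis ..
    | add z z' hz hz' => exact add₃ _ _ _ _ hz hz'
    | single c t => exact basis ..
  have h₁ : ∀ a r y, p (single a r) y z := fun a r y => by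
    induction y using Finsupp.induction_linear with
    | zero => rw [zero_eq]; exact h₂ ..
    | add y y' hy hy' => exact add₂ _ _ _ _ hy hy'
    | single b s => exact h₂ ..
  induction x using Finsupp.induction_linear with
  | zero => rw [zero_eq]; exact h₁ ..
  | add x x' hx hx' => exact add₁ _ _ _ _ hx hx'
  | single a r => exact h₁ ..

end EC

namespace E3

open EC

noncomputable def lmu3 : E3 N →ₗ[ℚ] E3 N →ₗ[ℚ] E3 N :=
  linearCombination ℚ fun u => linearCombination ℚ (mu3B u)

noncomputable def lbd3 : E3 N →ₗ[ℚ] E3 N := linearCombination ℚ bd3B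

theorem bd3_eq_lbd3 (x : E3 N) : bd3 x = lbd3 x := (linearCombination_apply ℚ x).symm

theorem mu3_eq_lmu3 (x y : E3 N) : mu3 x y = lmu3 x y := by
  simp only [mu3, lmu3, linearCombination_apply, Finsupp.sum, LinearMap.sum_apply,
    LinearMap.smul_apply, Finset.smul_sum, smul_smul]

@[simp] theorem lbd3_e3 (u : B3 N) : lbd3 (e3 u) = bd3B u := by
  simp [lbd3, e3]

@[simp] theorem lmu3_e3_e3 (u v : B3 N) : lmu3 (e3 u) (e3 v) = mu3B u v := by
  simp [lmu3, e3]

theorem lbd3_lt3 (x y z : EC N) :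
    lbd3 (lt3 x y z)
      = lt3 (lbd x) y z + lt3 (twist 1 x) (lbd y) z + lt3 (twist 1 x) (twist 1 y) (lbd z) := by
  induction x, y, z using induction_linear₃ with
  | add₁ x x' y z hx hx' => simp only [map_add, LinearMap.add_apply, hx, hx']; abel
  | add₂ x y y' z hy hy' => simp only [map_add, LinearMap.add_apply, hy, hy']; abel
  | add₃ x y z z' hz hz' => simp only [map_add, hz, hz']; abel
  | basis a b c r s t =>
    simp only [single_eq_smul_e, map_smul, LinearMap.smul_apply, lt3_e_e_e, lbd3_e3, bd3B,
      t3_eq_lt3, lbd_e, twist_e]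
    module

theorem lmu3_lt3_e3 (v : B3 N) (x y z : EC N) :
    lmu3 (lt3 x y z) (e3 v)
      = lt3 (lmu x (B.e v.1)) (lmu (twist v.1.cod y) (B.e v.2.1))
          (lmu (twist (v.1.cod + v.2.1.cod) z) (B.e v.2.2)) := by
  induction x, y, z using induction_linear₃ with
  | add₁ x x' y z hx hx' => simp only [map_add, LinearMap.add_apply, hx, hx']
  | add₂ x y y' z hy hy' => simp only [map_add, LinearMap.add_apply, hy, hy']
  | add₃ x y z z' hz hz' => simp only [map_add, LinearMap.add_apply, hz, hz']
  | basis a b c r s t =>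
    simp only [single_eq_smul_e, map_smul, LinearMap.smul_apply, lt3_e_e_e, lmu3_e3_e3, mu3B,
      t3_eq_lt3, lmu_e_e, twist_e]
    module

theorem lmu3_e3_lt3 (u : B3 N) (x y z : EC N) :
    lmu3 (e3 u) (lt3 x y z)
      = lt3 (lmu (B.e u.1) (twist (u.2.1.cod + u.2.2.cod) x))
          (lmu (B.e u.2.1) (twist u.2.2.cod y)) (lmu (B.e u.2.2) z) := by
  induction x, y, z using induction_linear₃ with
  | add₁ x x' y z hx hx' => simp only [map_add, LinearMap.add_apply, hx, hx']
  | add₂ x y y' z hy hy' => simp only [map_add, LinearMap.add_apply, hy, hy']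
  | add₃ x y z z' hz hz' => simp only [map_add, hz, hz']
  | basis a b c r s t =>
    simp only [single_eq_smul_e, map_smul, LinearMap.smul_apply, lt3_e_e_e, lmu3_e3_e3, mu3B,
      t3_eq_lt3, lmu_e_e, twist_e]
    module

theorem bd3_mu3_e3_e3 (h2 : (2 : ZMod N) ≠ 0) {u v : B3 N} (hu : noInf u) (hv : noInf v) :
    bd3 (mu3 (e3 u) (e3 v))
      = mu3 (bd3 (e3 u)) (e3 v) + ((-1 : ℚ) ^ cod3 u) • mu3 (e3 u) (bd3 (e3 v)) := by
  obtain ⟨hu₁, hu₂, hu₃⟩ := isI_eq_false_of_noInf hu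
  obtain ⟨hv₁, hv₂, hv₃⟩ := isI_eq_false_of_noInf hv
  obtain ⟨u₁, u₂, u₃⟩ := u
  obtain ⟨v₁, v₂, v₃⟩ := v
  simp only [bd3_eq_lbd3, mu3_eq_lmu3, lmu3_e3_e3, lbd3_e3, mu3B, bd3B, t3_eq_lt3, map_smul,
    lbd3_lt3, twist_muB, lbd_muB h2 hu₁ hv₁, lbd_muB h2 hu₂ hv₂, lbd_muB h2 hu₃ hv₃, map_add,
    LinearMap.add_apply, LinearMap.smul_apply, lmu3_lt3_e3, lmu3_e3_lt3, twist_e, twist_bdB,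
    lmu_e_e, cod3]
  rcases B.cod_eq_zero_or_one u₁ with h₁ | h₁ <;> rcases B.cod_eq_zero_or_one u₂ with h₂ | h₂ <;>
    rcases B.cod_eq_zero_or_one u₃ with h₃ | h₃ <;> rcases B.cod_eq_zero_or_one v₁ with h₄ | h₄ <;>
    rcases B.cod_eq_zero_or_one v₂ with h₅ | h₅ <;> simp only [h₁, h₂, h₃, h₄, h₅] <;> module

end E3

end

/-- on the cubical subcomplex `C3_N` (basis triples with no infinitesimal
component) the boundary satisfies the Leibniz product rule. -/
theorem leibniz_on_C3 (N : ℕ) (hN : 3 ≤ N) :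
    ∀ u v : B3 N, noInf u → noInf v →
      bd3 (mu3 (e3 u) (e3 v))
        = mu3 (bd3 (e3 u)) (e3 v) + ((-1 : ℚ) ^ cod3 u) • mu3 (e3 u) (bd3 (e3 v)) := by
  have h2 : (2 : ZMod N) ≠ 0 := by
    rw [← Nat.cast_ofNat, Ne, ZMod.natCast_eq_zero_iff]
    exact fun h => absurd (Nat.le_of_dvd two_pos h) (by omega)
  intro u v hu hv
  exact E3.bd3_mu3_e3_e3 h2 hu hv
end

section
/- The three-dimensional augmentation pairing satisfies Frobenius associativity: for all x, y, z ∈ E3_N, ⟨μ₃(x, y), z⟩₃ = ⟨x, μ₃(y, z)⟩₃. -/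
/-! Both sides are trilinear, so it suffices to compare them on basis triples `u, v, w`.
The product of two basis triples is a Koszul sign times the tensor product of the coordinatewise
products, and `μ(uᵢ, vᵢ)` is homogeneous of codimension `c(uᵢ) + c(vᵢ)`. Hence
`⟨μ₃(u, v), w⟩₃` is a sign times `∏ᵢ ε(μ(μ(uᵢ, vᵢ), wᵢ))` and `⟨u, μ₃(v, w)⟩₃` a sign times
`∏ᵢ ε(μ(uᵢ, μ(vᵢ, wᵢ)))`. The signs agree because the sign exponent is bilinear in the
codimensions, and the products agree factor by factor by the one-dimensional identity
`ε(μ(μ(a, b), c)) = ε(μ(a, μ(b, c)))` on basis elements, a finite case check. -/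

theorem Finsupp.sum_sum_mul_smul_eq_linearCombination {α β R M : Type*} [CommSemiring R]
    [AddCommMonoid M] [Module R M] (f : α → β → M) (x : α →₀ R) (y : β →₀ R) :
    (x.sum fun a ca => y.sum fun b cb => (ca * cb) • f a b)
      = Finsupp.linearCombination R (fun a => Finsupp.linearCombination R (f a)) x y := by
  simp [Finsupp.linearCombination_apply, Finsupp.smul_sum, mul_smul, LinearMap.finsupp_sum_apply]

section OneDim

variable {N : ℕ}

lemma eps_eq_linearCombination (x : EC N) : eps x = Finsupp.linearCombination ℚ B.epsB x := rfl

lemma eps_mu_e_right (X : EC N) (w : B N) :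
    eps (mu X (B.e w)) = Finsupp.linearCombination ℚ (fun b => eps (B.muB b w)) X := by
  simp [mu, B.e, Finsupp.linearCombination_apply, eps_eq_linearCombination, map_finsuppSum]

lemma eps_mu_e_left (u : B N) (Y : EC N) :
    eps (mu (B.e u) Y) = Finsupp.linearCombination ℚ (fun b => eps (B.muB u b)) Y := by
  simp [mu, B.e, Finsupp.linearCombination_apply, eps_eq_linearCombination, map_finsuppSum]

-- `2 ≠ 0` keeps `a - 1`, `a`, `a + 1` pairwise distinct; for `N = 1, 2` the identity fails.
set_option maxHeartbeats 1000000 in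
lemma eps_mu_muB_e (h2 : (2 : ZMod N) ≠ 0) (u v w : B N) :
    eps (mu (B.muB u v) (B.e w)) = eps (mu (B.e u) (B.muB v w)) := by
  rw [eps_mu_e_right, eps_mu_e_left]
  cases u <;> cases v <;> cases w <;>
    simp only [B.muB, apply_ite (Finsupp.linearCombination ℚ _), map_add, map_zero,
      Finsupp.linearCombination_single, eps_eq_linearCombination, smul_eq_mul, B.epsB] <;>
    split_ifs <;> first | norm_num; done | grind

lemma muB_mem_supported (u v : B N) :
    B.muB u v ∈ Finsupp.supported ℚ ℚ {b | b.cod = u.cod + v.cod} := by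
  cases u <;> cases v <;> simp only [B.muB] <;> (try split_ifs) <;>
    first
    | exact zero_mem _
    | exact Finsupp.single_mem_supported ℚ _ rfl
    | exact add_mem (add_mem (Finsupp.single_mem_supported ℚ _ rfl)
        (Finsupp.single_mem_supported ℚ _ rfl)) (Finsupp.single_mem_supported ℚ _ rfl)

lemma linearCombination_neg_one_pow_cod_mul {q : ℕ} {Y : EC N}
    (hY : Y ∈ Finsupp.supported ℚ ℚ {b | b.cod = q}) (k : ℕ) (g : B N → ℚ) :
    Finsupp.linearCombination ℚ (fun b => (-1) ^ (b.cod * k) * g b) Y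
      = (-1) ^ (q * k) * Finsupp.linearCombination ℚ g Y := by
  rw [Finsupp.linearCombination_apply, Finsupp.linearCombination_apply, Finsupp.mul_sum]
  refine Finsupp.sum_congr fun b hb => ?_
  rw [show b.cod = q from (Finsupp.mem_supported ℚ Y).1 hY hb, smul_eq_mul, smul_eq_mul]
  ring

end OneDim

section ThreeDim

variable {N : ℕ}

noncomputable def eps3ₗ : E3 N →ₗ[ℚ] ℚ :=
  Finsupp.linearCombination ℚ fun u => B.epsB u.1 * B.epsB u.2.1 * B.epsB u.2.2

noncomputable def mu3ₗ : E3 N →ₗ[ℚ] E3 N →ₗ[ℚ] E3 N :=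
  Finsupp.linearCombination ℚ fun u => Finsupp.linearCombination ℚ (mu3B u)

lemma mu3_eq (x y : E3 N) : mu3 x y = mu3ₗ x y :=
  Finsupp.sum_sum_mul_smul_eq_linearCombination mu3B x y

lemma pair3_eq (x y : E3 N) : pair3 x y = eps3ₗ (mu3ₗ x y) := by
  rw [pair3, mu3_eq]
  rfl

lemma single_eq_smul_e3 (u : B3 N) (c : ℚ) : Finsupp.single u c = c • e3 u := by
  rw [e3, Finsupp.smul_single_one]

lemma mu3ₗ_e3_e3 (u v : B3 N) : mu3ₗ (e3 u) (e3 v) = mu3B u v := by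
  simp [mu3ₗ, e3]

lemma map_t3 (Φ : E3 N →ₗ[ℚ] ℚ) (f g h : B N → ℚ)
    (hΦ : ∀ a b c, Φ (e3 (a, b, c)) = f a * g b * h c) (X Y Z : EC N) :
    Φ (t3 X Y Z) = Finsupp.linearCombination ℚ f X * Finsupp.linearCombination ℚ g Y *
      Finsupp.linearCombination ℚ h Z := by
  simp only [t3, map_finsuppSum, Finsupp.linearCombination_apply, smul_eq_mul, Finsupp.sum_mul]
  refine Finsupp.sum_congr fun a _ => ?_
  simp only [Finsupp.mul_sum, Finsupp.sum_mul]
  rw [Finsupp.sum_comm Z]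
  refine Finsupp.sum_congr fun b _ => Finsupp.sum_congr fun c _ => ?_
  rw [← Finsupp.smul_single_one, map_smul, ← e3, hΦ, smul_eq_mul]
  ring

lemma eps3ₗ_mu3B (u v : B3 N) :
    eps3ₗ (mu3B u v) = (-1) ^ (u.2.1.cod * v.1.cod + u.2.2.cod * v.1.cod + u.2.2.cod * v.2.1.cod) *
      (eps (B.muB u.1 v.1) * eps (B.muB u.2.1 v.2.1) * eps (B.muB u.2.2 v.2.2)) := by
  rw [mu3B, map_smul, smul_eq_mul,
    map_t3 eps3ₗ B.epsB B.epsB B.epsB (fun a b c => by simp [eps3ₗ, e3])]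
  rfl

-- The Koszul sign of `(a, b, c)` against `w` splits as
-- `(-1) ^ (c(b) c(w₁)) * (-1) ^ (c(c) (c(w₁) + c(w₂)))`, so it factors over the coordinates.
lemma eps3ₗ_mu3ₗ_t3_e3 {q r : ℕ} (X : EC N) {Y Z : EC N}
    (hY : Y ∈ Finsupp.supported ℚ ℚ {b | b.cod = q})
    (hZ : Z ∈ Finsupp.supported ℚ ℚ {b | b.cod = r}) (w : B3 N) :
    eps3ₗ (mu3ₗ (t3 X Y Z) (e3 w))
      = (-1) ^ (q * w.1.cod + r * w.1.cod + r * w.2.1.cod) *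
        (eps (mu X (B.e w.1)) * eps (mu Y (B.e w.2.1)) * eps (mu Z (B.e w.2.2))) := by
  have key := map_t3 (eps3ₗ ∘ₗ mu3ₗ.flip (e3 w)) (fun a => eps (B.muB a w.1))
    (fun b => (-1) ^ (b.cod * w.1.cod) * eps (B.muB b w.2.1))
    (fun c => (-1) ^ (c.cod * (w.1.cod + w.2.1.cod)) * eps (B.muB c w.2.2))
    (fun a b c => by
      simp only [LinearMap.comp_apply, LinearMap.flip_apply, mu3ₗ_e3_e3, eps3ₗ_mu3B]
      ring) X Y Z
  simp only [LinearMap.comp_apply, LinearMap.flip_apply] at key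
  rw [key, linearCombination_neg_one_pow_cod_mul hY, linearCombination_neg_one_pow_cod_mul hZ,
    eps_mu_e_right, eps_mu_e_right, eps_mu_e_right]
  ring

lemma eps3ₗ_mu3ₗ_e3_t3 {p q : ℕ} (u : B3 N) {X Y : EC N}
    (hX : X ∈ Finsupp.supported ℚ ℚ {b | b.cod = p})
    (hY : Y ∈ Finsupp.supported ℚ ℚ {b | b.cod = q}) (Z : EC N) :
    eps3ₗ (mu3ₗ (e3 u) (t3 X Y Z))
      = (-1) ^ (u.2.1.cod * p + u.2.2.cod * p + u.2.2.cod * q) *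
        (eps (mu (B.e u.1) X) * eps (mu (B.e u.2.1) Y) * eps (mu (B.e u.2.2) Z)) := by
  have key := map_t3 (eps3ₗ ∘ₗ mu3ₗ (e3 u))
    (fun a => (-1) ^ (a.cod * (u.2.1.cod + u.2.2.cod)) * eps (B.muB u.1 a))
    (fun b => (-1) ^ (b.cod * u.2.2.cod) * eps (B.muB u.2.1 b))
    (fun c => eps (B.muB u.2.2 c))
    (fun a b c => by
      simp only [LinearMap.comp_apply, mu3ₗ_e3_e3, eps3ₗ_mu3B]
      ring) X Y Z
  rw [LinearMap.comp_apply] at key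
  rw [key, linearCombination_neg_one_pow_cod_mul hX, linearCombination_neg_one_pow_cod_mul hY,
    eps_mu_e_left, eps_mu_e_left, eps_mu_e_left]
  ring

lemma eps3ₗ_mu3ₗ_mu3B_e3 (h2 : (2 : ZMod N) ≠ 0) (u v w : B3 N) :
    eps3ₗ (mu3ₗ (mu3B u v) (e3 w)) = eps3ₗ (mu3ₗ (e3 u) (mu3B v w)) := by
  simp only [mu3B, map_smul, LinearMap.smul_apply, smul_eq_mul]
  rw [eps3ₗ_mu3ₗ_t3_e3 _ (muB_mem_supported _ _) (muB_mem_supported _ _),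
    eps3ₗ_mu3ₗ_e3_t3 _ (muB_mem_supported _ _) (muB_mem_supported _ _),
    eps_mu_muB_e h2, eps_mu_muB_e h2, eps_mu_muB_e h2]
  ring

end ThreeDim

/-- Frobenius associativity of the three-dimensional augmentation pairing. -/
theorem pair3_frobenius (N : ℕ) (hN : 3 ≤ N) :
    ∀ x y z : E3 N, pair3 (mu3 x y) z = pair3 x (mu3 y z) := by
  have h2 : (2 : ZMod N) ≠ 0 := by
    rw [← Nat.cast_ofNat, Ne, ZMod.natCast_eq_zero_iff]
    exact fun h => absurd (Nat.le_of_dvd two_pos h) (by omega)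
  intro x y z
  simp only [pair3_eq, mu3_eq]
  induction x using Finsupp.induction_linear with
  | zero => simp
  | add x x' hx hx' => simp [hx, hx']
  | single u c =>
    induction y using Finsupp.induction_linear with
    | zero => simp
    | add y y' hy hy' => simp [hy, hy']
    | single v d =>
      induction z using Finsupp.induction_linear with
      | zero => simp
      | add z z' hz hz' => simp [hz, hz']
      | single w e =>
        simp only [single_eq_smul_e3, map_smul, LinearMap.smul_apply, mu3ₗ_e3_e3,
          eps3ₗ_mu3ₗ_mu3B_e3 h2]
end

section
/- The subcomplex FC_N is closed under the three-dimensional intersection product: if u and v are basis triples each of which either has no infinitesimal component and at least one point component (a cell of dimension ≤ 2), or has exactly one infinitesimal component and two point components (an infinitesimal stick), then μ₃(u, v) ∈ FC_N. -/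
/-
A component of a basis product `μ(x, y)` is a point exactly when one of `x`, `y` is a point and
the other is not; two points multiply to zero. Hence every triple in the support of `μ₃(u, v)`
has `nP u + nP v` point components. Triples in `FC_N` have at least one point, so the product
has at least two, and a triple with at least two points (hence at most one non-point) lies in `FC_N`.
-/

namespace B

variable {N : ℕ}

lemma isP_count_of_mem_support_muB {x y z : B N} (h : z ∈ (muB x y).support) :
    (if isP z then 1 else 0 : ℕ) = (if isP x then 1 else 0) + (if isP y then 1 else 0) := by
  rw [Finsupp.mem_support_iff] at h
  rcases x with a | a | a <;> rcases y with b | b | b <;> rcases z with c | c | c <;>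
    simp only [muB] at h <;> (try split_ifs at h) <;> simp_all [Finsupp.single_apply, isP]

end B

variable {N : ℕ}

lemma support_t3_subset (x y z : EC N) :
    (t3 x y z).support ⊆ x.support ×ˢ y.support ×ˢ z.support := by
  refine Finsupp.support_sum.trans <| Finset.biUnion_subset.2 fun a ha => ?_
  refine Finsupp.support_sum.trans <| Finset.biUnion_subset.2 fun b hb => ?_
  refine Finsupp.support_sum.trans <| Finset.biUnion_subset.2 fun c hc => ?_
  exact Finsupp.support_single_subset.trans (by simp [ha, hb, hc])

lemma nP_of_mem_support_mu3B {u v w : B3 N} (h : w ∈ (mu3B u v).support) :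
    nP w = nP u + nP v := by
  obtain ⟨h₁, h₂, h₃⟩ : w.1 ∈ _ ∧ w.2.1 ∈ _ ∧ w.2.2 ∈ _ := by
    simpa only [Finset.mem_product] using support_t3_subset _ _ _ (Finsupp.support_smul h)
  simp only [nP, B.isP_count_of_mem_support_muB h₁, B.isP_count_of_mem_support_muB h₂,
    B.isP_count_of_mem_support_muB h₃]
  ring

lemma nI_add_nP_le (u : B3 N) : nI u + nP u ≤ 3 := by
  obtain ⟨x, y, z⟩ := u
  rcases x with _ | _ | _ <;> rcases y with _ | _ | _ <;> rcases z with _ | _ | _ <;>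
    simp [nI, nP, isI, isP]

lemma inFC_of_two_le_nP {u : B3 N} (h : 2 ≤ nP u) : inFC u := by
  have := nI_add_nP_le u
  unfold inFC
  omega

lemma one_le_nP_of_inFC {u : B3 N} (h : inFC u) : 1 ≤ nP u := by
  unfold inFC at h
  omega

lemma FCsub_eq_supported : FCsub N = Finsupp.supported ℚ ℚ {u | inFC u} := by
  rw [Finsupp.supported_eq_span_single, FCsub]
  congr 1
  ext x
  simp [e3, eq_comm]

lemma mu3_e3 (u v : B3 N) : mu3 (e3 u) (e3 v) = mu3B u v := by
  simp [mu3, e3, Finsupp.sum_single_index]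

theorem FC_closed_under_mu3_general (N : ℕ) :
    ∀ u v : B3 N, inFC u → inFC v → mu3 (e3 u) (e3 v) ∈ FCsub N := by
  intro u v hu hv
  rw [mu3_e3, FCsub_eq_supported, Finsupp.mem_supported]
  intro w hw
  apply inFC_of_two_le_nP
  have hu₁ := one_le_nP_of_inFC hu
  have hv₁ := one_le_nP_of_inFC hv
  rw [nP_of_mem_support_mu3B hw]
  omega

/-- the subcomplex `FC_N` is closed under the three-dimensional
intersection product. -/
theorem FC_closed_under_mu3 (N : ℕ) (hN : 3 ≤ N) :
    ∀ u v : B3 N, inFC u → inFC v → mu3 (e3 u) (e3 v) ∈ FCsub N :=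
  FC_closed_under_mu3_general N
end
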